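/- arXiv:1104.1442 — 2 statements merged into one kernel-verified Lean document; each statement's English description precedes it below -/
import Mathlib

section
/- Let (Σ_A, T) be a topologically mixing subshift of finite type and Φ ∈ C_aa(Σ_A,T,d). For each k ∈ ℕ define the step approximation Φ^{(k)} = (S_n φ̃_k)_{n≥1}, where φ̃_k(x) := φ_k(x_w)/k for x ∈ [w], w ∈ Σ_{A,k}, and x_w ∈ [w] an arbitrary chosen point. Then: (i) Φ_min ≤ Φ^{(k)}_min ≤ Φ^{(k)}_max ≤ Φ_max (componentwise); (ii) ‖φ_n − S_n φ̃_k‖_∞ ≤ d·((n/k)|C(Φ)| + 5k‖Φ‖ + (‖Φ‖_k/k)·n) for all n; and consequently (iii) ‖Φ − Φ^{(k)}‖_lim → 0 as k → ∞. -/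
open Filter Topology MeasureTheory Set
open scoped ENNReal NNReal

namespace AlmostAdditivePaper

variable {m : ℕ}

/-- The one-sided subshift of finite type determined by a transition matrix `A`
(with entries `0`/`1`). -/
abbrev Subshift (A : Matrix (Fin m) (Fin m) ℕ) : Type :=
  {x : ℕ → Fin m // ∀ n, A (x n) (x (n + 1)) = 1}

/-- The left shift map `T`. -/
def shiftT (A : Matrix (Fin m) (Fin m) ℕ) : Subshift A → Subshift A :=
  fun x => ⟨fun n => x.1 (n + 1), fun n => x.2 (n + 1)⟩

/-- `A` is a 0-1 matrix with `A ^ p₀ > 0` entrywise for some `p₀ ≥ 1`: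
the subshift `Σ_A` is topologically mixing. -/
def Mixing (A : Matrix (Fin m) (Fin m) ℕ) : Prop :=
  (∀ i j, A i j = 0 ∨ A i j = 1) ∧ ∃ p₀ : ℕ, 0 < p₀ ∧ ∀ i j, 0 < (A ^ p₀) i j

/-- Scalar almost additive potential `Φ = (φ_n)_{n ≥ 1}` with constant `C = C(Φ)`;
we use the convention `φ₀ = 0`. -/
structure AlmostAdditive (A : Matrix (Fin m) (Fin m) ℕ)
    (Φ : ℕ → Subshift A → ℝ) (C : ℝ) : Prop where
  posC : 0 < C
  cont : ∀ n, Continuous (Φ n)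
  zero : ∀ x, Φ 0 x = 0
  upper : ∀ n p x, Φ (n + p) x ≤ Φ n x + Φ p ((shiftT A)^[n] x) + C
  lower : ∀ n p x, Φ n x + Φ p ((shiftT A)^[n] x) - C ≤ Φ (n + p) x

/-- Vector-valued almost additive potential: each component is almost additive,
with constant `C j` for the `j`-th component. -/
def AlmostAdditiveVec {d : ℕ} (A : Matrix (Fin m) (Fin m) ℕ)
    (Φ : ℕ → Subshift A → EuclideanSpace ℝ (Fin d)) (C : Fin d → ℝ) : Prop :=
  ∀ j : Fin d, AlmostAdditive A (fun n x => Φ n x j) (C j)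

/-- The cylinder `[w]` of a word `w`. -/
def cyl (A : Matrix (Fin m) (Fin m) ℕ) (w : List (Fin m)) : Set (Subshift A) :=
  {x | ∀ i : Fin w.length, x.1 i.1 = w.get i}

/-- The word `w` is admissible. -/
def AdmWord (A : Matrix (Fin m) (Fin m) ℕ) (w : List (Fin m)) : Prop :=
  ∀ i : ℕ, (h : i + 1 < w.length) → A (w.get ⟨i, by omega⟩) (w.get ⟨i + 1, h⟩) = 1

/-- `x|_n`, the prefix of length `n` of `x ∈ Σ_A`. -/
def wordPrefix {A : Matrix (Fin m) (Fin m) ℕ} (x : Subshift A) (n : ℕ) : List (Fin m) :=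
  List.ofFn fun i : Fin n => x.1 i

/-- `Φ[w] := sup {exp (φ_{|w|}(x)) : x ∈ [w]}`. -/
noncomputable def wordSup (A : Matrix (Fin m) (Fin m) ℕ) (Φ : ℕ → Subshift A → ℝ)
    (w : List (Fin m)) : ℝ :=
  sSup ((fun x => Real.exp (Φ w.length x)) '' cyl A w)

/-- The distance `d_Ψ(x,y) = Ψ[x ∧ y]` associated with a potential `Ψ`. -/
noncomputable def dPsi (A : Matrix (Fin m) (Fin m) ℕ) (Ψ : ℕ → Subshift A → ℝ)
    (x y : Subshift A) : ℝ :=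
  letI := Classical.dec (x = y)
  if h : x = y then 0
  else wordSup A Ψ (wordPrefix x (Nat.find (show ∃ n, x.1 n ≠ y.1 n by
    by_contra hc
    push_neg at hc
    exact h (Subtype.ext (funext hc)))))

/-- The closed ball of center `x` and radius `r` for `d_Ψ`. -/
def ballD (A : Matrix (Fin m) (Fin m) ℕ) (Ψ : ℕ → Subshift A → ℝ)
    (x : Subshift A) (r : ℝ) : Set (Subshift A) :=
  {y | dPsi A Ψ x y ≤ r}

/-- `B_t(Ψ)`: words whose cylinder is a closed ball of radius `e^{-t}` in `(Σ_A, d_Ψ)`. -/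
def Bn (A : Matrix (Fin m) (Fin m) ℕ) (Ψ : ℕ → Subshift A → ℝ) (t : ℝ) :
    Set (List (Fin m)) :=
  {w | ∃ x, cyl A w = ballD A Ψ x (Real.exp (-t))}

variable {E : Type*} [NormedAddCommGroup E] [NormedSpace ℝ E]

/-- `‖φ‖_n := sup {|φ(x) − φ(y)| : x|_n = y|_n}`. -/
noncomputable def varN (A : Matrix (Fin m) (Fin m) ℕ) (φ : Subshift A → E) (n : ℕ) : ℝ :=
  sSup {r | ∃ x y : Subshift A, wordPrefix x n = wordPrefix y n ∧ r = ‖φ x - φ y‖}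

/-- The sup norm `‖φ‖_∞`. -/
noncomputable def supNorm (A : Matrix (Fin m) (Fin m) ℕ) (φ : Subshift A → E) : ℝ :=
  sSup (Set.range fun x => ‖φ x‖)

/-- `‖Φ − Θ‖_lim := limsup_n ‖φ_n − θ_n‖_∞ / n`. -/
noncomputable def limNorm (A : Matrix (Fin m) (Fin m) ℕ) (Φ Θ : ℕ → Subshift A → E) : ℝ :=
  Filter.limsup (fun n : ℕ => supNorm A (fun x => Φ n x - Θ n x) / n) atTop

/-- `Φ_max := max φ₁ + C(Φ)`. -/
noncomputable def PhiMax (A : Matrix (Fin m) (Fin m) ℕ) (Φ : ℕ → Subshift A → ℝ)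
    (C : ℝ) : ℝ :=
  sSup (Set.range (Φ 1)) + C

/-- `Φ_min := min φ₁ − C(Φ)`. -/
noncomputable def PhiMin (A : Matrix (Fin m) (Fin m) ℕ) (Φ : ℕ → Subshift A → ℝ)
    (C : ℝ) : ℝ :=
  sInf (Set.range (Φ 1)) - C

/-- `‖Φ‖ := |Φ_max| ∨ |Φ_min|`. -/
noncomputable def PhiNorm (A : Matrix (Fin m) (Fin m) ℕ) (Φ : ℕ → Subshift A → ℝ)
    (C : ℝ) : ℝ :=
  max |PhiMax A Φ C| |PhiMin A Φ C|

/-- `μ` is a `T`-invariant Borel probability measure. -/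
def InvMeasure (A : Matrix (Fin m) (Fin m) ℕ) (μ : Measure (Subshift A)) : Prop :=
  IsProbabilityMeasure μ ∧ μ.map (shiftT A) = μ

/-- `L_Φ = {Φ_*(μ) : μ ∈ M(Σ_A,T)}`, where `Φ_*(μ) = lim_n (1/n) ∫ φ_n dμ`. -/
def LPhi (A : Matrix (Fin m) (Fin m) ℕ) (Φ : ℕ → Subshift A → E) : Set E :=
  {α | ∃ μ : Measure (Subshift A), InvMeasure A μ ∧
      Tendsto (fun n : ℕ => (n : ℝ)⁻¹ • ∫ x, Φ n x ∂μ) atTop (𝓝 α)}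

/-- `Φ_*(μ) = lim_n (1/n) ∫ φ_n dμ`. -/
noncomputable def potStar (A : Matrix (Fin m) (Fin m) ℕ) (Φ : ℕ → Subshift A → E)
    (μ : Measure (Subshift A)) : E :=
  limUnder atTop fun n : ℕ => (n : ℝ)⁻¹ • ∫ x, Φ n x ∂μ

/-- Entropy of the partition of `Σ_A` into cylinders of length `n`. -/
noncomputable def cylEnt (A : Matrix (Fin m) (Fin m) ℕ) (μ : Measure (Subshift A))
    (n : ℕ) : ℝ :=
  ∑ w : Fin n → Fin m, Real.negMulLog ((μ (cyl A (List.ofFn w))).toReal)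

/-- The measure-theoretic (Kolmogorov–Sinai) entropy `h_μ(T)`, computed through the
natural generating partition into cylinders. -/
noncomputable def entKS (A : Matrix (Fin m) (Fin m) ℕ) (μ : Measure (Subshift A)) : ℝ :=
  limUnder atTop fun n : ℕ => cylEnt A μ n / n

/-- The level set `E_Φ(α) = {x : lim_n φ_n(x)/n = α}`. -/
def EPhi (A : Matrix (Fin m) (Fin m) ℕ) (Φ : ℕ → Subshift A → E) (α : E) :
    Set (Subshift A) :=
  {x | Tendsto (fun n : ℕ => (n : ℝ)⁻¹ • Φ n x) atTop (𝓝 α)}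

/-- The localized level set `E_Φ(ξ) = {x : lim_n φ_n(x)/n = ξ(x)}`. -/
def EPhiXi (A : Matrix (Fin m) (Fin m) ℕ) (Φ : ℕ → Subshift A → E)
    (ξ : Subshift A → E) : Set (Subshift A) :=
  {x | Tendsto (fun n : ℕ => (n : ℝ)⁻¹ • Φ n x) atTop (𝓝 (ξ x))}

/-- `F(α,t,ε,Φ,Ψ)`. -/
def Fset (A : Matrix (Fin m) (Fin m) ℕ) (Φ : ℕ → Subshift A → E)
    (Ψ : ℕ → Subshift A → ℝ) (α : E) (t ε : ℝ) : Set (List (Fin m)) :=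
  {u | u ∈ Bn A Ψ t ∧ ∃ x ∈ cyl A u, ‖(u.length : ℝ)⁻¹ • Φ u.length x - α‖ < ε}

/-- `f(α,t,ε,Φ,Ψ) = # F(α,t,ε,Φ,Ψ)`. -/
noncomputable def fcard (A : Matrix (Fin m) (Fin m) ℕ) (Φ : ℕ → Subshift A → E)
    (Ψ : ℕ → Subshift A → ℝ) (α : E) (t ε : ℝ) : ℕ :=
  Nat.card (Fset A Φ Ψ α t ε)

/-- The large deviation spectrum
`Λ(α) = lim_{ε → 0⁺} limsup_n log f(α,n,ε) / n`. -/
noncomputable def LambdaD (A : Matrix (Fin m) (Fin m) ℕ) (Φ : ℕ → Subshift A → E)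
    (Ψ : ℕ → Subshift A → ℝ) (α : E) : ℝ :=
  limUnder (𝓝[>] (0 : ℝ)) fun ε : ℝ =>
    Filter.limsup (fun n : ℕ => Real.log (fcard A Φ Ψ α n ε) / n) atTop

/-- `D(Ψ) = lim_n log (# B_n(Ψ)) / n`. -/
noncomputable def DPsi (A : Matrix (Fin m) (Fin m) ℕ) (Ψ : ℕ → Subshift A → ℝ) : ℝ :=
  limUnder atTop fun n : ℕ => Real.log (Nat.card (Bn A Ψ (n : ℝ))) / n

/-- The conditional variational principle quantity
`E(α) = sup {h_μ(T)/(-Ψ_*(μ)) : μ invariant, Φ_*(μ) = α}`. -/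
noncomputable def EEsup (A : Matrix (Fin m) (Fin m) ℕ) (Φ : ℕ → Subshift A → E)
    (Ψ : ℕ → Subshift A → ℝ) (α : E) : ℝ :=
  sSup {r | ∃ μ : Measure (Subshift A), InvMeasure A μ ∧ potStar A Φ μ = α ∧
    r = entKS A μ / (-(potStar A Ψ μ))}

/-! ### Dimensions relative to a distance function `ρ` -/

/-- Diameter of a set, relative to a distance function `ρ`. -/
noncomputable def setDiam {X : Type*} (ρ : X → X → ℝ) (U : Set X) : ℝ≥0∞ :=
  ⨆ x ∈ U, ⨆ y ∈ U, ENNReal.ofReal (ρ x y)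

/-- `s`-dimensional Hausdorff measure relative to `ρ`. -/
noncomputable def hMeasD {X : Type*} (ρ : X → X → ℝ) (s : ℝ) (e : Set X) : ℝ≥0∞ :=
  ⨆ (δ : ℝ) (_ : 0 < δ),
    ⨅ (U : ℕ → Set X) (_ : e ⊆ ⋃ n, U n) (_ : ∀ n, setDiam ρ (U n) ≤ ENNReal.ofReal δ),
      ∑' n, setDiam ρ (U n) ^ s

/-- Hausdorff dimension relative to `ρ`. -/
noncomputable def hdimD {X : Type*} (ρ : X → X → ℝ) (e : Set X) : ℝ≥0∞ :=
  ⨆ (s : ℝ≥0) (_ : hMeasD ρ (s : ℝ) e = ⊤), (s : ℝ≥0∞)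

/-- Minimal number of sets of diameter `≤ δ` needed to cover `e` (relative to `ρ`). -/
noncomputable def coverNum {X : Type*} (ρ : X → X → ℝ) (e : Set X) (δ : ℝ) : ℕ :=
  sInf {k : ℕ | ∃ U : Fin k → Set X, e ⊆ ⋃ i, U i ∧ ∀ i, setDiam ρ (U i) ≤ ENNReal.ofReal δ}

/-- Upper box-counting dimension relative to `ρ`. -/
noncomputable def uboxD {X : Type*} (ρ : X → X → ℝ) (e : Set X) : ℝ≥0∞ :=
  Filter.limsup (fun n : ℕ =>
    ENNReal.ofReal (Real.log (coverNum ρ e (Real.exp (-(n : ℝ)))) / n)) atTop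

/-- Lower box-counting dimension relative to `ρ`. -/
noncomputable def lboxD {X : Type*} (ρ : X → X → ℝ) (e : Set X) : ℝ≥0∞ :=
  Filter.liminf (fun n : ℕ =>
    ENNReal.ofReal (Real.log (coverNum ρ e (Real.exp (-(n : ℝ)))) / n)) atTop

/-- Packing dimension relative to `ρ` (via the modified upper box dimension). -/
noncomputable def pdimD {X : Type*} (ρ : X → X → ℝ) (e : Set X) : ℝ≥0∞ :=
  ⨅ (F : ℕ → Set X) (_ : e ⊆ ⋃ n, F n), ⨆ n, uboxD ρ (F n)

/-! ### Weak concavity and cone points -/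

/-- `h` is weakly concave on the convex set `s`. -/
def WeaklyConcaveOn {V : Type*} [AddCommGroup V] [Module ℝ V] (s : Set V) (h : V → ℝ) :
    Prop :=
  ∃ c : ℝ, 1 ≤ c ∧ ∀ α ∈ s, ∀ β ∈ s, ∃ γ₁ ∈ Set.Icc c⁻¹ c, ∃ γ₂ ∈ Set.Icc c⁻¹ c,
    ∀ l ∈ Set.Icc (0 : ℝ) 1,
      l * h α + (1 - l) * h β ≤
        h ((l * γ₁ + (1 - l) * γ₂)⁻¹ • ((l * γ₁) • α + ((1 - l) * γ₂) • β))

/-- `x` is an `ε`-cone point of `s`. -/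
def IsConePoint {V : Type*} [NormedAddCommGroup V] [NormedSpace ℝ V] (s : Set V)
    (x : V) (ε : ℝ) : Prop :=
  ∀ y ∈ s ∩ Metric.ball x ε, y ≠ x → segment ℝ x (x + (ε / ‖y - x‖) • (y - x)) ⊆ s

/-- `x` is a local cone point of `s`. -/
def IsLocalConePoint {V : Type*} [NormedAddCommGroup V] [NormedSpace ℝ V] (s : Set V)
    (x : V) : Prop :=
  ∃ ε > 0, IsConePoint s x ε

/-- The step function `φ̃_k(x) = φ_k(x_w)/k` for `x ∈ [w]`, `|w| = k`, where
`pt w = x_w` is an arbitrarily chosen point of `[w]`. -/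
noncomputable def stepFn {m d : ℕ} (A : Matrix (Fin m) (Fin m) ℕ)
    (Φ : ℕ → Subshift A → EuclideanSpace ℝ (Fin d)) (pt : List (Fin m) → Subshift A)
    (k : ℕ) (x : Subshift A) : EuclideanSpace ℝ (Fin d) :=
  (k : ℝ)⁻¹ • Φ k (pt (wordPrefix x k))

/-- The Birkhoff sums `S_n φ̃_k`, i.e. the additive approximation `Φ^{(k)}`. -/
noncomputable def stepApprox {m d : ℕ} (A : Matrix (Fin m) (Fin m) ℕ)
    (Φ : ℕ → Subshift A → EuclideanSpace ℝ (Fin d)) (pt : List (Fin m) → Subshift A)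
    (k n : ℕ) (x : Subshift A) : EuclideanSpace ℝ (Fin d) :=
  ∑ j ∈ Finset.range n, stepFn A Φ pt k ((shiftT A)^[j] x)

/-!
Almost additivity makes the Birkhoff sum `∑_{i<n} φ_k ∘ Tⁱ` telescope to `k φ_n`, up to an error
`n C` (one use of almost additivity per summand) and a boundary term of order `k² ‖Φ‖`.
Replacing `φ_k` by the step function `φ_k(x_w)` costs at most `‖Φ‖_k` per summand, which gives
the uniform bound (ii); the extreme values (i) come from `n Φ_min ≤ φ_n ≤ n Φ_max`.

By (ii), `‖Φ − Φ^{(k)}‖_lim ≤ (C + ‖Φ‖_k) / k`, so (iii) reduces to `‖Φ‖_k = o(k)`. For this,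
compare `φ_k x` and `φ_k y` with Birkhoff sums of a fixed `φ_{k₀}`: when `x|_k = y|_k`, uniform
continuity of `φ_{k₀}` makes all but the last `L` summands agree up to `δ`, whence
`‖Φ‖_k / k ≤ (δ + 2C) / k₀ + O(1/k)`.
-/

lemma _root_.Finset.sum_range_shift_sub {M : Type*} [AddCommGroup M] (f : ℕ → M) (n k : ℕ) :
    ∑ i ∈ Finset.range n, (f (i + k) - f i) = ∑ t ∈ Finset.range k, (f (n + t) - f t) := by
  have h₁ := Finset.sum_range_add f n k
  have h₂ := Finset.sum_range_add f k n
  rw [add_comm k n, h₁] at h₂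
  simp only [Finset.sum_sub_distrib, add_comm _ k]
  rw [← sub_eq_zero] at h₂
  rw [← sub_eq_zero, ← neg_eq_zero, ← h₂]
  abel

lemma _root_.abs_sum_range_sub_sum_le {a b : ℕ → ℝ} {c : ℝ} {n : ℕ}
    (h : ∀ i < n, |a i - b i| ≤ c) :
    |∑ i ∈ Finset.range n, a i - ∑ i ∈ Finset.range n, b i| ≤ n * c := by
  rw [← Finset.sum_sub_distrib]
  calc _ ≤ ∑ i ∈ Finset.range n, |a i - b i| := Finset.abs_sum_le_sum_abs _ _
    _ ≤ ∑ _i ∈ Finset.range n, c := Finset.sum_le_sum fun i hi => h i (Finset.mem_range.1 hi)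
    _ = n * c := by simp

lemma _root_.sum_range_le_of_le_of_le {f : ℕ → ℝ} {n L : ℕ} {δ M : ℝ} (hδ : 0 ≤ δ) (hM : 0 ≤ M)
    (hgood : ∀ i, i + L ≤ n → f i ≤ δ) (hall : ∀ i, f i ≤ M) :
    ∑ i ∈ Finset.range n, f i ≤ n * δ + L * M := by
  rw [← Finset.sum_range_add_sum_Ico f (Nat.sub_le n L)]
  have hgood_sum := Finset.sum_le_card_nsmul (Finset.range (n - L)) f δ fun i hi =>
    hgood i (by have := Finset.mem_range.1 hi; omega)
  have hbad_sum := Finset.sum_le_card_nsmul (Finset.Ico (n - L) n) f M fun i _ => hall i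
  rw [Finset.card_range, nsmul_eq_mul] at hgood_sum
  rw [Nat.card_Ico, nsmul_eq_mul] at hbad_sum
  have h₁ : ((n - L : ℕ) : ℝ) ≤ n := by exact_mod_cast Nat.sub_le n L
  have h₂ : ((n - (n - L) : ℕ) : ℝ) ≤ L := by exact_mod_cast (by omega : n - (n - L) ≤ L)
  nlinarith

lemma _root_.sum_le_card_mul_sqrt_sum_sq {ι : Type*} [Fintype ι] (a : ι → ℝ) :
    ∑ i, a i ≤ Fintype.card ι * √(∑ i, a i ^ 2) := by
  have h (i : ι) : a i ≤ √(∑ i, a i ^ 2) := by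
    refine (le_abs_self _).trans ?_
    rw [← Real.sqrt_sq_eq_abs]
    exact Real.sqrt_le_sqrt
      (Finset.single_le_sum (fun i _ => sq_nonneg (a i)) (Finset.mem_univ i))
  simpa using Finset.sum_le_card_nsmul Finset.univ a _ fun i _ => h i

lemma _root_.EuclideanSpace.norm_le_sum_abs {ι : Type*} [Fintype ι] (v : EuclideanSpace ℝ ι) :
    ‖v‖ ≤ ∑ i, |v i| := by
  rw [EuclideanSpace.norm_eq, Real.sqrt_le_left (Finset.sum_nonneg fun i _ => abs_nonneg _)]
  simpa using Finset.sum_sq_le_sq_sum_of_nonneg (s := Finset.univ) (f := fun i => |v i|)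
    fun i _ => abs_nonneg _

lemma _root_.limsup_nonneg_and_le_of_le_add_div {u : ℕ → ℝ} {a b : ℝ} (h0 : ∀ n, 0 ≤ u n)
    (hu : ∀ n, 0 < n → u n ≤ a + b / n) :
    0 ≤ Filter.limsup u atTop ∧ Filter.limsup u atTop ≤ a := by
  have hv : Tendsto (fun n : ℕ => a + b / n) atTop (𝓝 a) := by
    simpa using tendsto_const_nhds.add (tendsto_const_div_atTop_nhds_zero_nat b)
  have hle : u ≤ᶠ[atTop] fun n => a + b / n := (eventually_gt_atTop 0).mono hu
  refine ⟨le_limsup_of_frequently_le (Frequently.of_forall h0)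
    (hv.isBoundedUnder_le.mono_le hle), ?_⟩
  rw [← hv.limsup_eq]
  exact limsup_le_limsup hle (isCoboundedUnder_le_of_le atTop h0) hv.isBoundedUnder_le

section Subshift

variable {m : ℕ} {A : Matrix (Fin m) (Fin m) ℕ}

lemma shiftT_iterate_apply (x : Subshift A) (n i : ℕ) :
    ((shiftT A)^[n] x).1 i = x.1 (i + n) := by
  induction n generalizing x with
  | zero => rfl
  | succ n ih => rw [Function.iterate_succ_apply, ih]; rfl

lemma wordPrefix_eq_iff {x y : Subshift A} {k : ℕ} :
    wordPrefix x k = wordPrefix y k ↔ ∀ i < k, x.1 i = y.1 i := by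
  simp only [wordPrefix, List.ofFn_inj, funext_iff, Fin.forall_iff]

lemma wordPrefix_eq_of_mem_cyl {x y : Subshift A} {k : ℕ} (h : y ∈ cyl A (wordPrefix x k)) :
    wordPrefix y k = wordPrefix x k :=
  wordPrefix_eq_iff.2 fun i hi => by simpa [wordPrefix] using h ⟨i, by simpa [wordPrefix]⟩

lemma wordPrefix_shiftT_iterate_eq {x y : Subshift A} {k i L : ℕ}
    (hxy : wordPrefix x k = wordPrefix y k) (hi : i + L ≤ k) :
    wordPrefix ((shiftT A)^[i] x) L = wordPrefix ((shiftT A)^[i] y) L := by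
  rw [wordPrefix_eq_iff] at *
  intro t ht
  rw [shiftT_iterate_apply, shiftT_iterate_apply]
  exact hxy _ (by omega)

instance : CompactSpace (Subshift A) := by
  refine isCompact_iff_compactSpace.1 (IsClosed.isCompact ?_)
  show IsClosed {x : ℕ → Fin m | ∀ n, A (x n) (x (n + 1)) = 1}
  rw [Set.ofPred_forall]
  exact isClosed_iInter fun n => (isClosed_discrete {p : Fin m × Fin m | A p.1 p.2 = 1}).preimage
    (by fun_prop : Continuous fun x : ℕ → Fin m => (x n, x (n + 1)))

lemma exists_dist_lt_of_wordPrefix_eq {X : Type*} [PseudoMetricSpace X]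
    {f : Subshift A → X} (hf : Continuous f) {ε : ℝ} (hε : 0 < ε) :
    ∃ L, ∀ x y, wordPrefix x L = wordPrefix y L → dist (f x) (f y) < ε := by
  let far : Set (Subshift A × Subshift A) := {p | ε ≤ dist (f p.1) (f p.2)}
  let agree (L : ℕ) : Set (Subshift A × Subshift A) := ⋂ i < L, {p | p.1.1 i = p.2.1 i}
  have hfar : IsCompact far := (isClosed_le continuous_const (by fun_prop)).isCompact
  have hagree (L : ℕ) : IsClosed (agree L) := by
    have hcoord (i : ℕ) : Continuous fun x : Subshift A => x.1 i :=
      (continuous_apply i).comp continuous_subtype_val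
    exact isClosed_iInter fun i => isClosed_iInter fun _ =>
      isClosed_eq ((hcoord i).comp continuous_fst) ((hcoord i).comp continuous_snd)
  have hanti : Antitone agree := fun L L' hLL' =>
    Set.biInter_subset_biInter_left fun i (hi : i < L) => (by omega : i < L')
  have hdisj : far ∩ ⋂ L, agree L = ∅ := by
    ext ⟨x, y⟩
    simp only [far, agree, Set.mem_inter_iff, Set.mem_iInter, Set.mem_ofPred_eq,
      Set.mem_empty_iff_false, iff_false, not_and]
    intro hxy hagree
    obtain rfl : x = y := Subtype.ext (funext fun i => hagree (i + 1) i (by omega))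
    rw [dist_self] at hxy
    linarith
  obtain ⟨L, hL⟩ := hfar.elim_directed_family_closed agree hagree hdisj hanti.directed_ge
  refine ⟨L, fun x y hxy => not_le.1 fun hfxy => ?_⟩
  exact Set.eq_empty_iff_forall_notMem.1 hL (x, y)
    ⟨hfxy, Set.mem_iInter₂.2 (wordPrefix_eq_iff.1 hxy)⟩

end Subshift

section Variation

variable {m : ℕ} {A : Matrix (Fin m) (Fin m) ℕ} {E : Type*} [NormedAddCommGroup E]

lemma varN_nonneg (φ : Subshift A → E) (n : ℕ) : 0 ≤ varN A φ n :=
  Real.sSup_nonneg fun _ ⟨_, _, _, hr⟩ => hr ▸ norm_nonneg _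

lemma norm_sub_le_varN {φ : Subshift A → E} (hφ : Continuous φ) {n : ℕ} {x y : Subshift A}
    (hxy : wordPrefix x n = wordPrefix y n) : ‖φ x - φ y‖ ≤ varN A φ n := by
  refine le_csSup ?_ ⟨x, y, hxy, rfl⟩
  refine (isCompact_range (by fun_prop : Continuous fun p : Subshift A × Subshift A =>
    ‖φ p.1 - φ p.2‖)).bddAbove.mono ?_
  rintro _ ⟨u, v, -, rfl⟩
  exact ⟨(u, v), rfl⟩

lemma supNorm_le {φ : Subshift A → E} {B : ℝ} (hB : 0 ≤ B) (h : ∀ x, ‖φ x‖ ≤ B) :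
    supNorm A φ ≤ B :=
  Real.sSup_le (Set.forall_mem_range.2 h) hB

lemma supNorm_nonneg (φ : Subshift A → E) : 0 ≤ supNorm A φ :=
  Real.sSup_nonneg (Set.forall_mem_range.2 fun _ => norm_nonneg _)

end Variation

namespace AlmostAdditive

variable {m : ℕ} {A : Matrix (Fin m) (Fin m) ℕ} {φ : ℕ → Subshift A → ℝ} {c : ℝ}

lemma bddAbove_range (h : AlmostAdditive A φ c) (n : ℕ) : BddAbove (Set.range (φ n)) :=
  (isCompact_range (h.cont n)).bddAbove

lemma bddBelow_range (h : AlmostAdditive A φ c) (n : ℕ) : BddBelow (Set.range (φ n)) :=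
  (isCompact_range (h.cont n)).bddBelow

lemma le_mul_phiMax (h : AlmostAdditive A φ c) (n : ℕ) (x : Subshift A) :
    φ n x ≤ n * PhiMax A φ c := by
  induction n with
  | zero => simp [h.zero]
  | succ n ih =>
    have := le_csSup (h.bddAbove_range 1) (Set.mem_range_self ((shiftT A)^[n] x))
    have := h.upper n 1 x
    rw [PhiMax] at *
    push_cast
    linarith

lemma mul_phiMin_le (h : AlmostAdditive A φ c) (n : ℕ) (x : Subshift A) :
    n * PhiMin A φ c ≤ φ n x := by
  induction n with
  | zero => simp [h.zero]
  | succ n ih =>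
    have := csInf_le (h.bddBelow_range 1) (Set.mem_range_self ((shiftT A)^[n] x))
    have := h.lower n 1 x
    rw [PhiMin] at *
    push_cast
    linarith

lemma abs_le_mul_phiNorm (h : AlmostAdditive A φ c) (n : ℕ) (x : Subshift A) :
    |φ n x| ≤ n * PhiNorm A φ c := by
  have hmax : PhiMax A φ c ≤ PhiNorm A φ c := (le_abs_self _).trans (le_max_left _ _)
  have hmin : -PhiNorm A φ c ≤ PhiMin A φ c := neg_le.1 ((neg_le_abs _).trans (le_max_right _ _))
  have hn : (0 : ℝ) ≤ n := n.cast_nonneg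
  rw [abs_le]
  constructor <;> nlinarith [h.le_mul_phiMax n x, h.mul_phiMin_le n x]

lemma le_phiNorm (h : AlmostAdditive A φ c) : c ≤ PhiNorm A φ c := by
  have := Real.sInf_le_sSup _ (h.bddBelow_range 1) (h.bddAbove_range 1)
  have hmax : PhiMax A φ c ≤ PhiNorm A φ c := (le_abs_self _).trans (le_max_left _ _)
  have hmin : -PhiNorm A φ c ≤ PhiMin A φ c := neg_le.1 ((neg_le_abs _).trans (le_max_right _ _))
  rw [PhiMax, PhiMin] at *
  linarith

lemma phiNorm_nonneg (h : AlmostAdditive A φ c) : 0 ≤ PhiNorm A φ c :=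
  h.posC.le.trans h.le_phiNorm

lemma abs_sub_sub_le (h : AlmostAdditive A φ c) (n p : ℕ) (x : Subshift A) :
    |φ (n + p) x - φ n x - φ p ((shiftT A)^[n] x)| ≤ c :=
  abs_le.2 ⟨by linarith [h.lower n p x], by linarith [h.upper n p x]⟩

lemma abs_mul_sub_sum_le (h : AlmostAdditive A φ c) (k n : ℕ) (x : Subshift A) :
    |k * φ n x - ∑ i ∈ Finset.range n, φ k ((shiftT A)^[i] x)| ≤
      n * c + k * (2 * k * PhiNorm A φ c + c) := by
  set f : ℕ → ℝ := fun t => φ t x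
  have hsplit : |∑ i ∈ Finset.range n, (f (i + k) - f i) -
      ∑ i ∈ Finset.range n, φ k ((shiftT A)^[i] x)| ≤ n * c :=
    abs_sum_range_sub_sum_le fun i _ => h.abs_sub_sub_le i k x
  have hboundary : |∑ t ∈ Finset.range k, (f (n + t) - f t) -
      ∑ _t ∈ Finset.range k, f n| ≤ k * (2 * k * PhiNorm A φ c + c) := by
    refine abs_sum_range_sub_sum_le fun t ht => ?_
    have htk : (t : ℝ) * PhiNorm A φ c ≤ k * PhiNorm A φ c :=
      mul_le_mul_of_nonneg_right (by exact_mod_cast ht.le) h.phiNorm_nonneg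
    have h₁ := h.abs_sub_sub_le n t x
    have h₂ := h.abs_le_mul_phiNorm t ((shiftT A)^[n] x)
    have h₃ := h.abs_le_mul_phiNorm t x
    rw [abs_le] at *
    constructor <;> linarith
  rw [Finset.sum_range_shift_sub, Finset.sum_const, Finset.card_range, nsmul_eq_mul] at *
  rw [abs_le] at *
  constructor <;> linarith

end AlmostAdditive

noncomputable def sumPhiNorm {m d : ℕ} (A : Matrix (Fin m) (Fin m) ℕ)
    (Φ : ℕ → Subshift A → EuclideanSpace ℝ (Fin d)) (C : Fin d → ℝ) : ℝ :=
  ∑ j, PhiNorm A (fun n x => Φ n x j) (C j)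

namespace AlmostAdditiveVec

variable {m d : ℕ} {A : Matrix (Fin m) (Fin m) ℕ}
  {Φ : ℕ → Subshift A → EuclideanSpace ℝ (Fin d)} {C : Fin d → ℝ}

lemma continuous (hΦ : AlmostAdditiveVec A Φ C) (n : ℕ) : Continuous (Φ n) :=
  (PiLp.continuous_toLp 2 _).comp (continuous_pi fun j => (hΦ j).cont n)

lemma sum_const_nonneg (hΦ : AlmostAdditiveVec A Φ C) : 0 ≤ ∑ j, C j :=
  Finset.sum_nonneg fun j _ => (hΦ j).posC.le

lemma sumPhiNorm_nonneg (hΦ : AlmostAdditiveVec A Φ C) : 0 ≤ sumPhiNorm A Φ C :=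
  Finset.sum_nonneg fun j _ => (hΦ j).phiNorm_nonneg

lemma sum_const_le_sumPhiNorm (hΦ : AlmostAdditiveVec A Φ C) :
    ∑ j, C j ≤ sumPhiNorm A Φ C :=
  Finset.sum_le_sum fun j _ => (hΦ j).le_phiNorm

lemma norm_le_mul_sumPhiNorm (hΦ : AlmostAdditiveVec A Φ C) (n : ℕ) (x : Subshift A) :
    ‖Φ n x‖ ≤ n * sumPhiNorm A Φ C := by
  rw [sumPhiNorm, Finset.mul_sum]
  exact (EuclideanSpace.norm_le_sum_abs _).trans
    (Finset.sum_le_sum fun j _ => (hΦ j).abs_le_mul_phiNorm n x)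

lemma norm_smul_sub_sum_le (hΦ : AlmostAdditiveVec A Φ C) (k n : ℕ) (x : Subshift A) :
    ‖(k : ℝ) • Φ n x - ∑ i ∈ Finset.range n, Φ k ((shiftT A)^[i] x)‖ ≤
      n * ∑ j, C j + k * (2 * k * sumPhiNorm A Φ C + ∑ j, C j) := by
  refine (EuclideanSpace.norm_le_sum_abs _).trans ?_
  calc ∑ j, |((k : ℝ) • Φ n x - ∑ i ∈ Finset.range n, Φ k ((shiftT A)^[i] x)) j|
      ≤ ∑ j, (n * C j + k * (2 * k * PhiNorm A (fun n x => Φ n x j) (C j) + C j)) := by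
        refine Finset.sum_le_sum fun j _ => ?_
        simpa [WithLp.ofLp_sum] using (hΦ j).abs_mul_sub_sum_le k n x
    _ = n * ∑ j, C j + k * (2 * k * sumPhiNorm A Φ C + ∑ j, C j) := by
        simp only [sumPhiNorm, mul_add, Finset.sum_add_distrib, Finset.mul_sum]

lemma norm_sub_le_of_wordPrefix_eq (hΦ : AlmostAdditiveVec A Φ C) {k₀ L : ℕ} (hk₀ : 0 < k₀)
    {δ : ℝ} (hδ : 0 ≤ δ)
    (hL : ∀ u v, wordPrefix u L = wordPrefix v L → ‖Φ k₀ u - Φ k₀ v‖ ≤ δ)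
    {k : ℕ} {x y : Subshift A} (hxy : wordPrefix x k = wordPrefix y k) :
    ‖Φ k x - Φ k y‖ ≤
      k * ((δ + 2 * ∑ j, C j) / k₀) + 2 * ((L + 2 * k₀) * sumPhiNorm A Φ C + ∑ j, C j) := by
  have hk₀' : (0 : ℝ) < k₀ := by exact_mod_cast hk₀
  set N := sumPhiNorm A Φ C
  set S : Subshift A → EuclideanSpace ℝ (Fin d) :=
    fun z => ∑ i ∈ Finset.range k, Φ k₀ ((shiftT A)^[i] z)
  have hx := hΦ.norm_smul_sub_sum_le k₀ k x
  have hy := hΦ.norm_smul_sub_sum_le k₀ k y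
  have hS : ‖S x - S y‖ ≤ k * δ + L * (2 * k₀ * N) := by
    rw [← Finset.sum_sub_distrib]
    refine (norm_sum_le _ _).trans (sum_range_le_of_le_of_le hδ
      (by have := hΦ.sumPhiNorm_nonneg; positivity)
      (fun i hi => hL _ _ (wordPrefix_shiftT_iterate_eq hxy hi)) fun i => ?_)
    have hu := hΦ.norm_le_mul_sumPhiNorm k₀ ((shiftT A)^[i] x)
    have hv := hΦ.norm_le_mul_sumPhiNorm k₀ ((shiftT A)^[i] y)
    linarith [norm_sub_le (Φ k₀ ((shiftT A)^[i] x)) (Φ k₀ ((shiftT A)^[i] y))]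
  have hsplit : (k₀ : ℝ) * ‖Φ k x - Φ k y‖ ≤
      ‖(k₀ : ℝ) • Φ k x - S x‖ + ‖(k₀ : ℝ) • Φ k y - S y‖ + ‖S x - S y‖ :=
    calc (k₀ : ℝ) * ‖Φ k x - Φ k y‖ = ‖(k₀ : ℝ) • (Φ k x - Φ k y)‖ := by
          rw [norm_smul, Real.norm_natCast]
      _ = ‖((k₀ : ℝ) • Φ k x - S x) - ((k₀ : ℝ) • Φ k y - S y) + (S x - S y)‖ := by
          congr 1
          module
      _ ≤ _ := (norm_add_le _ _).trans (add_le_add_left (norm_sub_le _ _) _)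
  refine le_of_mul_le_mul_left (hsplit.trans ?_) hk₀'
  have hrhs : (k₀ : ℝ) * (k * ((δ + 2 * ∑ j, C j) / k₀) +
      2 * ((L + 2 * k₀) * N + ∑ j, C j)) =
      k * δ + L * (2 * k₀ * N) + 2 * (k * ∑ j, C j + k₀ * (2 * k₀ * N + ∑ j, C j)) := by
    field_simp
    ring
  rw [hrhs]
  linarith

lemma tendsto_varN_div (hΦ : AlmostAdditiveVec A Φ C) :
    Tendsto (fun k : ℕ => varN A (Φ k) k / k) atTop (𝓝 0) := by
  refine tendsto_order.2 ⟨fun a ha => Eventually.of_forall fun k =>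
    ha.trans_le (div_nonneg (varN_nonneg _ _) k.cast_nonneg), fun ε hε => ?_⟩
  have hC := hΦ.sum_const_nonneg
  obtain ⟨k₀, hk₀⟩ := exists_nat_gt (2 * (1 + 2 * ∑ j, C j) / ε)
  have hk₀' : (0 : ℝ) < k₀ := lt_of_le_of_lt (by positivity) hk₀
  have hfirst : (1 + 2 * ∑ j, C j) / k₀ < ε / 2 := by
    rw [div_lt_iff₀ hε] at hk₀
    rw [div_lt_iff₀ hk₀']
    linarith
  obtain ⟨L, hL⟩ := exists_dist_lt_of_wordPrefix_eq (hΦ.continuous k₀) one_pos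
  set B := 2 * ((L + 2 * k₀) * sumPhiNorm A Φ C + ∑ j, C j)
  have hB : 0 ≤ B := by have := hΦ.sumPhiNorm_nonneg; positivity
  have hvar (k : ℕ) : varN A (Φ k) k ≤ k * ((1 + 2 * ∑ j, C j) / k₀) + B := by
    refine Real.sSup_le ?_ (by positivity)
    rintro _ ⟨x, y, hxy, rfl⟩
    refine hΦ.norm_sub_le_of_wordPrefix_eq (by exact_mod_cast hk₀') zero_le_one
      (fun u v h => ?_) hxy
    simpa [dist_eq_norm] using (hL u v h).le
  filter_upwards [(tendsto_const_div_atTop_nhds_zero_nat B).eventually (gt_mem_nhds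
    (half_pos hε)), eventually_gt_atTop 0] with k hBk hk
  have hk' : (0 : ℝ) < k := by exact_mod_cast hk
  calc varN A (Φ k) k / k ≤ (k * ((1 + 2 * ∑ j, C j) / k₀) + B) / k := by gcongr; exact hvar k
    _ = (1 + 2 * ∑ j, C j) / k₀ + B / k := by field_simp
    _ < ε := by linarith

end AlmostAdditiveVec

section StepApprox

variable {m d : ℕ} {A : Matrix (Fin m) (Fin m) ℕ}
  {Φ : ℕ → Subshift A → EuclideanSpace ℝ (Fin d)} {C : Fin d → ℝ}
  {pt : List (Fin m) → Subshift A}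

lemma stepFn_apply (k : ℕ) (x : Subshift A) (j : Fin d) :
    stepFn A Φ pt k x j = (k : ℝ)⁻¹ * Φ k (pt (wordPrefix x k)) j := rfl

lemma stepFn_apply_mem_Icc (hΦ : AlmostAdditiveVec A Φ C) {k : ℕ} (hk : 0 < k)
    (x : Subshift A) (j : Fin d) :
    stepFn A Φ pt k x j ∈
      Set.Icc (PhiMin A (fun n x => Φ n x j) (C j)) (PhiMax A (fun n x => Φ n x j) (C j)) := by
  have hk' : (0 : ℝ) < k := by exact_mod_cast hk
  rw [stepFn_apply, Set.mem_Icc, le_inv_mul_iff₀ hk', inv_mul_le_iff₀ hk']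
  exact ⟨(hΦ j).mul_phiMin_le k _, (hΦ j).le_mul_phiMax k _⟩

lemma stepFn_range_bounds (hΦ : AlmostAdditiveVec A Φ C) {k : ℕ} (hk : 0 < k) (j : Fin d) :
    PhiMin A (fun n x => Φ n x j) (C j) ≤ sInf (Set.range fun x => stepFn A Φ pt k x j) ∧
      sInf (Set.range fun x => stepFn A Φ pt k x j) ≤
        sSup (Set.range fun x => stepFn A Φ pt k x j) ∧
      sSup (Set.range fun x => stepFn A Φ pt k x j) ≤ PhiMax A (fun n x => Φ n x j) (C j) := by
  have hmem := stepFn_apply_mem_Icc (pt := pt) hΦ hk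
  rcases isEmpty_or_nonempty (Subshift A) with hX | hX
  · -- on the empty shift `sInf ∅ = sSup ∅ = 0` lies between `Φ_min = -C` and `Φ_max = C`
    simp [PhiMin, PhiMax, Set.range_eq_empty, (hΦ j).posC.le]
  · refine ⟨le_csInf (Set.range_nonempty _) (Set.forall_mem_range.2 fun x => (hmem x j).1),
      Real.sInf_le_sSup _ ⟨_, Set.forall_mem_range.2 fun x => (hmem x j).1⟩
        ⟨_, Set.forall_mem_range.2 fun x => (hmem x j).2⟩,
      csSup_le (Set.range_nonempty _) (Set.forall_mem_range.2 fun x => (hmem x j).2)⟩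

lemma norm_sub_stepApprox_le_sum (hΦ : AlmostAdditiveVec A Φ C)
    (hpt : ∀ (x : Subshift A) (k : ℕ), pt (wordPrefix x k) ∈ cyl A (wordPrefix x k))
    {k : ℕ} (hk : 0 < k) (n : ℕ) (x : Subshift A) :
    ‖Φ n x - stepApprox A Φ pt k n x‖ ≤
      n / k * ∑ j, C j + (2 * k * sumPhiNorm A Φ C + ∑ j, C j) + varN A (Φ k) k / k * n := by
  have hk' : (0 : ℝ) < k := by exact_mod_cast hk
  set y : ℕ → Subshift A := fun i => (shiftT A)^[i] x
  have hdecomp : Φ n x - stepApprox A Φ pt k n x =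
      (k : ℝ)⁻¹ • ((k : ℝ) • Φ n x - ∑ i ∈ Finset.range n, Φ k (y i)) +
      (k : ℝ)⁻¹ • ∑ i ∈ Finset.range n, (Φ k (y i) - Φ k (pt (wordPrefix (y i) k))) := by
    simp only [stepApprox, stepFn, smul_sub, Finset.smul_sum, Finset.sum_sub_distrib, smul_smul,
      inv_mul_cancel₀ hk'.ne', one_smul, y]
    abel
  have hstep : ‖∑ i ∈ Finset.range n, (Φ k (y i) - Φ k (pt (wordPrefix (y i) k)))‖ ≤
      n * varN A (Φ k) k := by
    refine (norm_sum_le _ _).trans ?_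
    simpa using Finset.sum_le_sum (s := Finset.range n) fun i _ =>
      norm_sub_le_varN (hΦ.continuous k) (wordPrefix_eq_of_mem_cyl (hpt (y i) k)).symm
  rw [hdecomp]
  refine (norm_add_le _ _).trans ?_
  rw [norm_smul, norm_smul, norm_inv, Real.norm_natCast]
  calc (k : ℝ)⁻¹ * ‖(k : ℝ) • Φ n x - ∑ i ∈ Finset.range n, Φ k (y i)‖ +
        (k : ℝ)⁻¹ * ‖∑ i ∈ Finset.range n, (Φ k (y i) - Φ k (pt (wordPrefix (y i) k)))‖
      ≤ (k : ℝ)⁻¹ * (n * ∑ j, C j + k * (2 * k * sumPhiNorm A Φ C + ∑ j, C j)) +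
        (k : ℝ)⁻¹ * (n * varN A (Φ k) k) := by
        gcongr
        exact hΦ.norm_smul_sub_sum_le k n x
    _ = _ := by field_simp

lemma norm_sub_stepApprox_le (hΦ : AlmostAdditiveVec A Φ C)
    (hpt : ∀ (x : Subshift A) (k : ℕ), pt (wordPrefix x k) ∈ cyl A (wordPrefix x k))
    {k : ℕ} (hk : 0 < k) (n : ℕ) (x : Subshift A) :
    ‖Φ n x - stepApprox A Φ pt k n x‖ ≤
      (d : ℝ) * (((n : ℝ) / k) * Real.sqrt (∑ j, (C j) ^ 2) +
        5 * k * Real.sqrt (∑ j, (PhiNorm A (fun n x => Φ n x j) (C j)) ^ 2) +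
        (varN A (Φ k) k / k) * n) := by
  rcases Nat.eq_zero_or_pos d with rfl | hd
  · simp [Subsingleton.elim (Φ n x - stepApprox A Φ pt k n x) 0]
  refine (norm_sub_stepApprox_le_sum hΦ hpt hk n x).trans ?_
  have hk' : (1 : ℝ) ≤ k := by exact_mod_cast hk
  have hd' : (1 : ℝ) ≤ d := by exact_mod_cast hd
  have hC := sum_le_card_mul_sqrt_sum_sq C
  have hN := sum_le_card_mul_sqrt_sum_sq fun j => PhiNorm A (fun n x => Φ n x j) (C j)
  rw [Fintype.card_fin] at hC hN
  have hCN := hΦ.sum_const_le_sumPhiNorm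
  have hN0 := hΦ.sumPhiNorm_nonneg
  have hV : 0 ≤ varN A (Φ k) k / k * n := by
    have := varN_nonneg (Φ k) k
    positivity
  have hnk : (0 : ℝ) ≤ n / k := by positivity
  have h₁ : (n / k : ℝ) * ∑ j, C j ≤ d * (n / k * √(∑ j, C j ^ 2)) := by
    nlinarith
  have h₂ : 2 * k * sumPhiNorm A Φ C + ∑ j, C j ≤
      d * (5 * k * √(∑ j, (PhiNorm A (fun n x => Φ n x j) (C j)) ^ 2)) := by
    rw [sumPhiNorm] at *
    nlinarith
  nlinarith

lemma limNorm_stepApprox_le (hΦ : AlmostAdditiveVec A Φ C)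
    (hpt : ∀ (x : Subshift A) (k : ℕ), pt (wordPrefix x k) ∈ cyl A (wordPrefix x k))
    {k : ℕ} (hk : 0 < k) :
    0 ≤ limNorm A Φ (stepApprox A Φ pt k) ∧
      limNorm A Φ (stepApprox A Φ pt k) ≤ (∑ j, C j + varN A (Φ k) k) / k := by
  have hk' : (0 : ℝ) < k := by exact_mod_cast hk
  set B := 2 * k * sumPhiNorm A Φ C + ∑ j, C j
  refine limsup_nonneg_and_le_of_le_add_div (b := B)
    (fun n => div_nonneg (supNorm_nonneg _) n.cast_nonneg) fun n hn => ?_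
  have hn' : (0 : ℝ) < n := by exact_mod_cast hn
  have hbound_nonneg : 0 ≤ n / k * ∑ j, C j + B + varN A (Φ k) k / k * n := by
    have := hΦ.sum_const_nonneg
    have := hΦ.sumPhiNorm_nonneg
    have := varN_nonneg (Φ k) k
    positivity
  calc supNorm A (fun x => Φ n x - stepApprox A Φ pt k n x) / n
      ≤ (n / k * ∑ j, C j + B + varN A (Φ k) k / k * n) / n := by
        gcongr
        exact supNorm_le hbound_nonneg (norm_sub_stepApprox_le_sum hΦ hpt hk n)
    _ = (∑ j, C j + varN A (Φ k) k) / k + B / n := by field_simp; ring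

end StepApprox

theorem statement11_general {m d : ℕ} (A : Matrix (Fin m) (Fin m) ℕ)
    (Φ : ℕ → Subshift A → EuclideanSpace ℝ (Fin d)) (C : Fin d → ℝ)
    (hΦ : AlmostAdditiveVec A Φ C)
    (pt : List (Fin m) → Subshift A)
    (hpt : ∀ (x : Subshift A) (k : ℕ), pt (wordPrefix x k) ∈ cyl A (wordPrefix x k)) :
    (∀ k : ℕ, 0 < k → ∀ j : Fin d,
      PhiMin A (fun n x => Φ n x j) (C j) ≤
        sInf (Set.range fun x => stepFn A Φ pt k x j) ∧
      sInf (Set.range fun x => stepFn A Φ pt k x j) ≤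
        sSup (Set.range fun x => stepFn A Φ pt k x j) ∧
      sSup (Set.range fun x => stepFn A Φ pt k x j) ≤
        PhiMax A (fun n x => Φ n x j) (C j)) ∧
    (∀ k : ℕ, 0 < k → ∀ (n : ℕ) (x : Subshift A),
      ‖Φ n x - stepApprox A Φ pt k n x‖ ≤
        (d : ℝ) * (((n : ℝ) / k) * Real.sqrt (∑ j, (C j) ^ 2) +
          5 * k * Real.sqrt (∑ j, (PhiNorm A (fun n x => Φ n x j) (C j)) ^ 2) +
          (varN A (Φ k) k / k) * n)) ∧
    Tendsto (fun k : ℕ => limNorm A Φ (stepApprox A Φ pt k)) atTop (𝓝 0) := by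
  refine ⟨fun k hk j => stepFn_range_bounds hΦ hk j,
    fun k hk n x => norm_sub_stepApprox_le hΦ hpt hk n x, ?_⟩
  have hbound : Tendsto (fun k : ℕ => (∑ j, C j + varN A (Φ k) k) / k) atTop (𝓝 0) := by
    simpa [add_div] using
      (tendsto_const_div_atTop_nhds_zero_nat (∑ j, C j)).add hΦ.tendsto_varN_div
  refine tendsto_of_tendsto_of_tendsto_of_le_of_le' tendsto_const_nhds hbound ?_ ?_ <;>
    filter_upwards [eventually_gt_atTop 0] with k hk
  exacts [(limNorm_stepApprox_le hΦ hpt hk).1, (limNorm_stepApprox_le hΦ hpt hk).2]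

/-- Properties of the Hölder (step) approximations `Φ^{(k)}` of an
almost additive potential `Φ`: comparison of the extreme values, a quantitative
uniform bound `‖φ_n − S_nφ̃_k‖_∞ ≤ d((n/k)|C(Φ)| + 5k‖Φ‖ + (‖Φ‖_k/k) n)`, and the
convergence `‖Φ − Φ^{(k)}‖_lim → 0`. -/
theorem statement11 {m d : ℕ} (hm : 0 < m) (A : Matrix (Fin m) (Fin m) ℕ) (hA : Mixing A)
    (Φ : ℕ → Subshift A → EuclideanSpace ℝ (Fin d)) (C : Fin d → ℝ)
    (hΦ : AlmostAdditiveVec A Φ C)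
    (pt : List (Fin m) → Subshift A)
    (hpt : ∀ (x : Subshift A) (k : ℕ), pt (wordPrefix x k) ∈ cyl A (wordPrefix x k)) :
    (∀ k : ℕ, 0 < k → ∀ j : Fin d,
      PhiMin A (fun n x => Φ n x j) (C j) ≤
        sInf (Set.range fun x => stepFn A Φ pt k x j) ∧
      sInf (Set.range fun x => stepFn A Φ pt k x j) ≤
        sSup (Set.range fun x => stepFn A Φ pt k x j) ∧
      sSup (Set.range fun x => stepFn A Φ pt k x j) ≤
        PhiMax A (fun n x => Φ n x j) (C j)) ∧
    (∀ k : ℕ, 0 < k → ∀ (n : ℕ) (x : Subshift A),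
      ‖Φ n x - stepApprox A Φ pt k n x‖ ≤
        (d : ℝ) * (((n : ℝ) / k) * Real.sqrt (∑ j, (C j) ^ 2) +
          5 * k * Real.sqrt (∑ j, (PhiNorm A (fun n x => Φ n x j) (C j)) ^ 2) +
          (varN A (Φ k) k / k) * n)) ∧
    Tendsto (fun k : ℕ => limNorm A Φ (stepApprox A Φ pt k)) atTop (𝓝 0) :=
  statement11_general A Φ C hΦ pt hpt
end AlmostAdditivePaper
end

section
/- Let X and Y be metric spaces and χ : X → Y a surjective map with the following property: there is a function N : (0,∞) → ℕ with log N(r)/log r → 0 as r → 0, such that for every r > 0 the preimage χ^{−1}(B) of any ball B of radius r in Y can be covered by at most N(r) subsets of X each of diameter less than r. Then for every set E ⊂ Y, dim_H E ≥ dim_H χ^{−1}(E). -/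
open Filter Topology MeasureTheory Set
open scoped ENNReal NNReal

namespace AlmostAdditivePaper

variable {m : ℕ}

variable {E : Type*} [NormedAddCommGroup E] [NormedSpace ℝ E]

/-! If `N(ρ) ≤ ρ^{-(t-s)}` for small `ρ`, then the preimage of a set `u` of diameter `< ρ`,
which lies in the `ρ`-ball about any of its points, is covered by `N(ρ)` sets of diameter
`< ρ`; its `t`-dimensional Hausdorff pre-measure is thus at most `N(ρ) ρ^t ≤ ρ^s`, and
letting `ρ ↓ diam u` gives `(diam u)^s`. Hence `μH[t] (χ⁻¹ E) ≤ μH[s] E`, which vanishes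
as soon as `dim_H E < s < t`. -/

def PreimageBallCover {X Y : Type*} [PseudoEMetricSpace X] [PseudoMetricSpace Y]
    (χ : X → Y) (N : ℝ → ℕ) : Prop :=
  ∀ r : ℝ, 0 < r → ∀ y : Y, ∃ U : Fin (N r) → Set X,
    χ ⁻¹' Metric.ball y r ⊆ ⋃ i, U i ∧ ∀ i, Metric.ediam (U i) < ENNReal.ofReal r

theorem eventually_natCast_le_rpow_neg {N : ℝ → ℕ}
    (hN : Tendsto (fun r : ℝ => Real.log (N r) / Real.log r) (𝓝[>] 0) (𝓝 0))
    {ε : ℝ} (hε : 0 < ε) : ∀ᶠ r in 𝓝[>] 0, (N r : ℝ) ≤ r ^ (-ε) := by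
  have hlog : ∀ᶠ r in 𝓝[>] (0 : ℝ), -ε < Real.log (N r) / Real.log r :=
    hN (Ioi_mem_nhds (neg_neg_of_pos hε))
  filter_upwards [hlog, Ioo_mem_nhdsGT zero_lt_one] with r hr ⟨hr0, hr1⟩
  rcases (N r).eq_zero_or_pos with hNr | hNr
  · rw [hNr, Nat.cast_zero]
    exact Real.rpow_nonneg hr0.le _
  rw [Real.le_rpow_iff_log_le (by exact_mod_cast hNr) hr0]
  exact ((lt_div_iff_of_neg (Real.log_neg hr0 hr1)).mp hr).le

theorem eventually_natCast_mul_rpow_le {N : ℝ → ℕ}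
    (hN : Tendsto (fun r : ℝ => Real.log (N r) / Real.log r) (𝓝[>] 0) (𝓝 0))
    {s t : ℝ} (hst : s < t) :
    ∀ᶠ r in 𝓝[>] 0, (N r : ℝ≥0∞) * ENNReal.ofReal r ^ t ≤ ENNReal.ofReal r ^ s := by
  filter_upwards [eventually_natCast_le_rpow_neg hN (sub_pos.mpr hst), self_mem_nhdsWithin]
    with r hNr (hr : 0 < r)
  have hreal : (N r : ℝ) * r ^ t ≤ r ^ s := by
    calc (N r : ℝ) * r ^ t ≤ r ^ (-(t - s)) * r ^ t := by gcongr
      _ = r ^ s := by rw [← Real.rpow_add hr]; ring_nf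
  rw [ENNReal.ofReal_rpow_of_pos hr, ENNReal.ofReal_rpow_of_pos hr, ← ENNReal.ofReal_natCast,
    ← ENNReal.ofReal_mul (Nat.cast_nonneg _)]
  exact ENNReal.ofReal_le_ofReal hreal

section PreimageCover

open OuterMeasure

variable {X Y : Type*} [EMetricSpace X] {χ : X → Y} {N : ℝ → ℕ}

theorem mkMetric'_pre_preimage_le_of_ediam_lt [PseudoMetricSpace Y]
    (hcov : PreimageBallCover χ N) {t : ℝ} (ht : 0 ≤ t) {r : ℝ≥0∞} {u : Set Y} {y : Y}
    (hy : y ∈ u) {ρ : ℝ} (hρ : 0 < ρ) (hρr : ENNReal.ofReal ρ ≤ r)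
    (hu : Metric.ediam u < ENNReal.ofReal ρ) :
    mkMetric'.pre (fun A => Metric.ediam A ^ t) r (χ ⁻¹' u) ≤ N ρ * ENNReal.ofReal ρ ^ t := by
  obtain ⟨U, hχU, hU⟩ := hcov ρ hρ y
  have hu_ball : u ⊆ Metric.ball y ρ := fun z hz => by
    rw [Metric.mem_ball, dist_comm, ← edist_lt_ofReal]
    exact (Metric.edist_le_ediam_of_mem hy hz).trans_lt hu
  calc mkMetric'.pre (fun A => Metric.ediam A ^ t) r (χ ⁻¹' u)
      ≤ mkMetric'.pre (fun A => Metric.ediam A ^ t) r (⋃ i, U i) :=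
        measure_mono ((preimage_mono hu_ball).trans hχU)
    _ ≤ ∑ i, mkMetric'.pre (fun A => Metric.ediam A ^ t) r (U i) :=
        measure_iUnion_fintype_le _ _
    _ ≤ ∑ _i : Fin (N ρ), ENNReal.ofReal ρ ^ t := Finset.sum_le_sum fun i _ =>
        (mkMetric'.pre_le ((hU i).le.trans hρr)).trans
          (ENNReal.rpow_le_rpow (hU i).le ht)
    _ = N ρ * ENNReal.ofReal ρ ^ t := by simp

theorem mkMetric'_pre_preimage_le_ediam_rpow [PseudoMetricSpace Y]
    (hcov : PreimageBallCover χ N) {s t c : ℝ} (ht : 0 ≤ t)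
    (hN : ∀ ρ ∈ Ioo 0 c, (N ρ : ℝ≥0∞) * ENNReal.ofReal ρ ^ t ≤ ENNReal.ofReal ρ ^ s)
    {r : ℝ≥0∞} (hcr : ENNReal.ofReal c ≤ r) {u : Set Y}
    (hu : Metric.ediam u < ENNReal.ofReal c) :
    mkMetric'.pre (fun A => Metric.ediam A ^ t) r (χ ⁻¹' u) ≤ Metric.ediam u ^ s := by
  rcases u.eq_empty_or_nonempty with rfl | ⟨y, hy⟩
  · simp
  set d := (Metric.ediam u).toReal
  have hd : ENNReal.ofReal d = Metric.ediam u := ENNReal.ofReal_toReal hu.ne_top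
  have hdc : d < c := by
    rw [← hd] at hu
    exact (ENNReal.ofReal_lt_ofReal_iff'.mp hu).1
  have hlim : Tendsto (fun ρ => ENNReal.ofReal ρ ^ s) (𝓝[>] d) (𝓝 (Metric.ediam u ^ s)) := by
    rw [← hd]
    exact ((ENNReal.continuous_rpow_const.comp ENNReal.continuous_ofReal).tendsto d).mono_left
      nhdsWithin_le_nhds
  refine ge_of_tendsto hlim ?_
  filter_upwards [Ioo_mem_nhdsGT hdc] with ρ ⟨hdρ, hρc⟩
  have hρ : 0 < ρ := ENNReal.toReal_nonneg.trans_lt hdρ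
  calc mkMetric'.pre (fun A => Metric.ediam A ^ t) r (χ ⁻¹' u)
      ≤ N ρ * ENNReal.ofReal ρ ^ t :=
        mkMetric'_pre_preimage_le_of_ediam_lt hcov ht hy hρ
          ((ENNReal.ofReal_le_ofReal hρc.le).trans hcr)
          (hd ▸ (ENNReal.ofReal_lt_ofReal_iff hρ).mpr hdρ)
    _ ≤ ENNReal.ofReal ρ ^ s := hN ρ ⟨hρ, hρc⟩

theorem hausdorffMeasure_preimage_le [MeasurableSpace X] [BorelSpace X] [MetricSpace Y]
    [MeasurableSpace Y] [BorelSpace Y] (hcov : PreimageBallCover χ N) {s t : ℝ} (ht : 0 ≤ t)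
    (hN : ∀ᶠ r in 𝓝[>] 0, (N r : ℝ≥0∞) * ENNReal.ofReal r ^ t ≤ ENNReal.ofReal r ^ s)
    (E : Set Y) : μH[t] (χ ⁻¹' E) ≤ μH[s] E := by
  obtain ⟨r₀, hr₀, hNr₀⟩ := mem_nhdsGT_iff_exists_Ioo_subset.mp hN
  rw [Measure.hausdorffMeasure, Measure.hausdorffMeasure, ← coe_mkMetric, ← coe_mkMetric,
    mkMetric, mkMetric']
  simp only [OuterMeasure.iSup_apply]
  refine iSup₂_le fun r hr => ?_
  obtain ⟨c, hc0, hcr₀, hcr⟩ : ∃ c : ℝ, 0 < c ∧ c ≤ r₀ ∧ ENNReal.ofReal c ≤ r := by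
    obtain ⟨c, -, hc0, hcm⟩ :=
      ENNReal.lt_iff_exists_real_btwn.mp (lt_min hr (ENNReal.ofReal_pos.mpr hr₀))
    exact ⟨c, ENNReal.ofReal_pos.mp hc0,
      ((ENNReal.ofReal_lt_ofReal_iff hr₀).mp (hcm.trans_le (min_le_right _ _))).le,
      (hcm.trans_le (min_le_left _ _)).le⟩
  have hle : OuterMeasure.map χ (mkMetric'.pre (fun A => Metric.ediam A ^ t) r) ≤
      mkMetric fun d => d ^ s :=
    le_mkMetric _ _ (ENNReal.ofReal (c / 2)) (by positivity) fun u hu =>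
      mkMetric'_pre_preimage_le_ediam_rpow hcov ht
        (fun ρ hρ => hNr₀ ⟨hρ.1, hρ.2.trans_le hcr₀⟩) hcr
        (hu.trans_lt ((ENNReal.ofReal_lt_ofReal_iff hc0).mpr (by linarith)))
  exact hle E

end PreimageCover

theorem statement17_general {X Y : Type*} [MetricSpace X] [MetricSpace Y]
    (χ : X → Y) (N : ℝ → ℕ)
    (hN : Tendsto (fun r : ℝ => Real.log (N r) / Real.log r) (𝓝[>] (0 : ℝ)) (𝓝 0))
    (hcov : ∀ r : ℝ, 0 < r → ∀ y : Y, ∃ U : Fin (N r) → Set X,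
      χ ⁻¹' (Metric.ball y r) ⊆ ⋃ i, U i ∧ ∀ i, EMetric.diam (U i) < ENNReal.ofReal r) :
    ∀ E : Set Y, dimH (χ ⁻¹' E) ≤ dimH E := by
  borelize X Y
  intro E
  refine dimH_le fun t ht => ?_
  by_contra! hlt
  obtain ⟨s, hEs, hst⟩ := ENNReal.lt_iff_exists_nnreal_btwn.mp hlt
  have hle : μH[t] (χ ⁻¹' E) ≤ μH[s] E :=
    hausdorffMeasure_preimage_le hcov t.2
      (eventually_natCast_mul_rpow_le hN (by exact_mod_cast hst)) E
  rw [ht, hausdorffMeasure_of_dimH_lt hEs] at hle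
  exact ENNReal.top_ne_zero (nonpos_iff_eq_zero.mp hle)

/-- If `χ : X → Y` is surjective and the preimage of every `r`-ball
of `Y` can be covered by `N(r)` sets of diameter `< r`, with `log N(r)/log r → 0` as
`r → 0⁺`, then `dim_H E ≥ dim_H χ⁻¹(E)` for every `E ⊆ Y`. -/
theorem statement17 {X Y : Type*} [MetricSpace X] [MetricSpace Y]
    [MeasurableSpace X] [BorelSpace X] [MeasurableSpace Y] [BorelSpace Y]
    (χ : X → Y) (hχ : Function.Surjective χ) (N : ℝ → ℕ)
    (hN : Tendsto (fun r : ℝ => Real.log (N r) / Real.log r) (𝓝[>] (0 : ℝ)) (𝓝 0))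
    (hcov : ∀ r : ℝ, 0 < r → ∀ y : Y, ∃ U : Fin (N r) → Set X,
      χ ⁻¹' (Metric.ball y r) ⊆ ⋃ i, U i ∧ ∀ i, EMetric.diam (U i) < ENNReal.ofReal r) :
    ∀ E : Set Y, dimH (χ ⁻¹' E) ≤ dimH E :=
  statement17_general χ N hN hcov

end AlmostAdditivePaper
end
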